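/- arXiv:1010.1386 — 4 statements merged into one kernel-verified Lean document; each statement's English description precedes it below -/
import Mathlib

section
/- If |p'(m)| - K·∑_{k≥1} |p^{(k+1)}(m)/k!|·r^k > 0 for some real K ≥ √2, then the closed disc of radius r centered at m ∈ ℝ contains at most one root of the polynomial p (counted without multiplicity, i.e., p has at most one root in the disc). -/
/-!
Suppose `z₁ ≠ z₂` are roots in the disc and write `p = ∑ cₖ (z - m)ᵏ`. Dividing `p(z₁) - p(z₂) = 0`
by `z₁ - z₂` gives `∑ₖ cₖ hₖ = 0` with `hₖ = ∑_{i<k} xⁱ y^(k-1-i)`, `x = z₁ - m`, `y = z₂ - m`.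
The `k = 1` term is `p'(m)`, and `‖cₖ hₖ‖ ≤ k ‖cₖ‖ r^(k-1)`, which is the `(k-1)`-st term of the
Taylor majorant of `p'` at `m`. Hence `|p'(m)| ≤ ∑_{k≥1} |(p')⁽ᵏ⁾(m)| / k! rᵏ`, which the test
excludes as soon as `K ≥ 1`.
-/

open Polynomial Finset
open scoped Nat

theorem norm_geom_sum₂_le {R : Type*} [SeminormedRing R] [NormOneClass R] {x y : R} {r : ℝ}
    (hx : ‖x‖ ≤ r) (hy : ‖y‖ ≤ r) (n : ℕ) :
    ‖∑ i ∈ range (n + 1), x ^ i * y ^ (n - i)‖ ≤ (n + 1) * r ^ n := by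
  calc ‖∑ i ∈ range (n + 1), x ^ i * y ^ (n - i)‖
      ≤ ∑ i ∈ range (n + 1), ‖x‖ ^ i * ‖y‖ ^ (n - i) := by
        refine (norm_sum_le _ _).trans (sum_le_sum fun i _ => ?_)
        exact (norm_mul_le _ _).trans
          (mul_le_mul (norm_pow_le _ _) (norm_pow_le _ _) (norm_nonneg _) (by positivity))
    _ ≤ ∑ i ∈ range (n + 1), r ^ n := by
        refine sum_le_sum fun i hi => ?_
        rw [← pow_mul_pow_sub r (mem_range_succ_iff.mp hi)]
        have hr : 0 ≤ r := (norm_nonneg x).trans hx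
        gcongr
    _ = (n + 1) * r ^ n := by simp

namespace Polynomial

theorem eval_sub_eval_eq_mul_sum {R : Type*} [CommRing R] (f : R[X]) {N : ℕ}
    (hN : f.natDegree < N) (x y : R) :
    f.eval x - f.eval y =
      (x - y) * ∑ k ∈ range N, f.coeff k * ∑ i ∈ range k, x ^ i * y ^ (k - 1 - i) := by
  rw [eval_eq_sum_range' hN, eval_eq_sum_range' hN, ← sum_sub_distrib, mul_sum]
  refine sum_congr rfl fun k _ => ?_
  rw [← mul_sub, ← geom_sum₂_mul]
  ring

theorem derivative_taylor {R : Type*} [CommSemiring R] (f : R[X]) (a : R) :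
    derivative (taylor a f) = taylor a (derivative f) := by
  simp [taylor_apply, derivative_comp]

variable {𝕜 : Type*} [RCLike 𝕜]

theorem norm_coeff_zero_derivative_le_of_eval_eq {f : 𝕜[X]} {x y : 𝕜} {r : ℝ} (hxy : x ≠ y)
    (hx : ‖x‖ ≤ r) (hy : ‖y‖ ≤ r) (h : f.eval x = f.eval y) :
    ‖f.derivative.coeff 0‖ ≤
      ∑ k ∈ Icc 1 f.derivative.natDegree, ‖f.derivative.coeff k‖ * r ^ k := by
  set d := f.derivative.natDegree
  set G : ℕ → 𝕜 := fun n => ∑ i ∈ range (n + 1), x ^ i * y ^ (n - i)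
  have hsum : ∑ k ∈ range (d + 2), f.coeff k * ∑ i ∈ range k, x ^ i * y ^ (k - 1 - i) = 0 := by
    have hdeg : f.natDegree < d + 2 := by simp only [d, natDegree_derivative]; omega
    have := f.eval_sub_eval_eq_mul_sum hdeg x y
    rw [h, sub_self, eq_comm, mul_eq_zero] at this
    exact this.resolve_left (sub_ne_zero.mpr hxy)
  have hcoeff : f.derivative.coeff 0 = -∑ k ∈ range d, f.coeff (k + 2) * G (k + 1) := by
    rw [sum_range_succ', sum_range_succ'] at hsum
    simp only [add_tsub_cancel_right, zero_add, range_one, tsub_self, zero_tsub, pow_zero,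
      mul_one, sum_singleton, range_zero, sum_empty, mul_zero, add_zero, coeff_derivative,
      CharP.cast_eq_zero, G] at hsum ⊢
    linear_combination hsum
  have hterm : ∀ k, ‖f.coeff (k + 1) * G k‖ ≤ ‖f.derivative.coeff k‖ * r ^ k := fun k => by
    rw [coeff_derivative, norm_mul, norm_mul, mul_assoc]
    have hk : ‖(k : 𝕜) + 1‖ = k + 1 := by exact_mod_cast RCLike.norm_natCast (K := 𝕜) (k + 1)
    rw [hk]
    exact mul_le_mul_of_nonneg_left (norm_geom_sum₂_le hx hy k) (norm_nonneg _)
  calc ‖f.derivative.coeff 0‖ ≤ ∑ k ∈ range d, ‖f.coeff (k + 2) * G (k + 1)‖ := by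
        rw [hcoeff, norm_neg]; exact norm_sum_le _ _
    _ ≤ ∑ k ∈ range d, ‖f.derivative.coeff (k + 1)‖ * r ^ (k + 1) :=
        sum_le_sum fun k _ => hterm (k + 1)
    _ = ∑ k ∈ Icc 1 d, ‖f.derivative.coeff k‖ * r ^ k := by
        rw [range_eq_Ico, sum_Ico_add' (fun k => ‖f.derivative.coeff k‖ * r ^ k),
          zero_add, Ico_add_one_right_eq_Icc]

theorem norm_taylor_coeff (g : 𝕜[X]) (a : 𝕜) (k : ℕ) :
    ‖(taylor a g).coeff k‖ = ‖(derivative^[k] g).eval a‖ / k ! := by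
  rw [taylor_coeff, ← factorial_smul_hasseDeriv, LinearMap.smul_apply, eval_smul, nsmul_eq_mul,
    norm_mul, RCLike.norm_natCast]
  field_simp

theorem norm_eval_derivative_le_of_eval_eq {g : 𝕜[X]} {a x y : 𝕜} {r : ℝ} (hxy : x ≠ y)
    (hx : ‖x - a‖ ≤ r) (hy : ‖y - a‖ ≤ r) (h : g.eval x = g.eval y) :
    ‖g.derivative.eval a‖ ≤ ∑ k ∈ Icc 1 g.derivative.natDegree,
      ‖(derivative^[k] g.derivative).eval a‖ / k ! * r ^ k := by
  have := norm_coeff_zero_derivative_le_of_eval_eq (f := taylor a g)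
    (sub_left_injective.ne hxy) hx hy (by simpa [taylor_eval] using h)
  simpa [derivative_taylor, natDegree_taylor, norm_taylor_coeff] using this

end Polynomial

theorem disc_contains_at_most_one_root_general (p : Polynomial ℝ) (m r K : ℝ)
    (hK : Real.sqrt 2 ≤ K)
    (hT : |(Polynomial.derivative p).eval m| -
      K * ∑ k ∈ Finset.Icc 1 (Polynomial.derivative p).natDegree,
        |((Polynomial.derivative^[k] (Polynomial.derivative p)).eval m)| / (Nat.factorial k : ℝ)
          * r ^ k > 0) :
    ∀ z₁ z₂ : ℂ, ‖z₁ - m‖ ≤ r → ‖z₂ - m‖ ≤ r →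
      (p.map (algebraMap ℝ ℂ)).eval z₁ = 0 → (p.map (algebraMap ℝ ℂ)).eval z₂ = 0 →
      z₁ = z₂ := by
  intro z₁ z₂ hz₁ hz₂ h₁ h₂
  by_contra hne
  have hK₁ : 1 ≤ K := (Real.one_le_sqrt.mpr one_le_two).trans hK
  have key := norm_eval_derivative_le_of_eval_eq (g := p.map (algebraMap ℝ ℂ)) (a := m)
    hne hz₁ hz₂ (h₁.trans h₂.symm)
  have hre : ∀ q : ℝ[X], ‖(q.map (algebraMap ℝ ℂ)).eval (m : ℂ)‖ = |q.eval m| := fun q => by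
    simp [eval_map_algebraMap, ← Complex.coe_algebraMap, aeval_algebraMap_apply]
  simp only [derivative_map, iterate_derivative_map, hre, natDegree_map] at key
  nlinarith [mul_le_mul_of_nonneg_right hK₁ ((abs_nonneg _).trans key)]

theorem disc_contains_at_most_one_root (p : Polynomial ℝ) (m r K : ℝ) (hr : 0 < r)
    (hK : Real.sqrt 2 ≤ K)
    (hT : |(Polynomial.derivative p).eval m| -
      K * ∑ k ∈ Finset.Icc 1 (Polynomial.derivative p).natDegree,
        |((Polynomial.derivative^[k] (Polynomial.derivative p)).eval m)| / (Nat.factorial k : ℝ)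
          * r ^ k > 0) :
    ∀ z₁ z₂ : ℂ, ‖z₁ - m‖ ≤ r → ‖z₂ - m‖ ≤ r →
      (p.map (algebraMap ℝ ℂ)).eval z₁ = 0 → (p.map (algebraMap ℝ ℂ)).eval z₂ = 0 →
      z₁ = z₂ :=
  disc_contains_at_most_one_root_general p m r K hK hT
end

section
/- Let R be a nonzero real polynomial of degree n, α a real root of R of multiplicity i₀, I = (a,b) an interval containing α with midpoint m and radius r = (b-a)/2, such that every root β ≠ α of R satisfies |β - m| > 8r. Then for every z on the circle |z - m| = 2r, one has |R(z)| > 2^{-i₀ - n}·|R(m - 2r)|. -/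
open Polynomial

/-!
Over `ℂ`, `|R(x)| = |lc R| · ∏_β |x - β|` over the roots with multiplicity, so `|R(z)|` and
`|R(w)|`, `w = m - 2r`, can be compared one linear factor at a time. Both points lie on the circle
`|x - m| = 2r`. A root `β` with `|β - m| > 6r` sees them at comparable distances,
`|w - β| < 2 |z - β|`, and the root `α`, within `r` of `m`, satisfies `|w - α| < 3 |z - α|`.
Multiplying over the `n` roots, `α` counted `i₀` times, gives `|R(w)| < 2^(i₀ + n) |R(z)|`.
-/

theorem Multiset.prod_map_lt_prod_map_of_nonneg {ι R : Type*} [CommSemiring R] [PartialOrder R]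
    [IsStrictOrderedRing R] {s : Multiset ι} (hs : s ≠ 0) (f g : ι → R)
    (h0 : ∀ i ∈ s, 0 ≤ f i) (h : ∀ i ∈ s, f i < g i) :
    (s.map f).prod < (s.map g).prod := by
  by_cases hzero : ∃ i ∈ s, f i = 0
  · obtain ⟨i, hi, hfi⟩ := hzero
    rw [prod_eq_zero (mem_map.mpr ⟨i, hi, hfi⟩)]
    exact prod_pos fun x hx => by
      obtain ⟨j, hj, rfl⟩ := mem_map.mp hx
      exact (h0 j hj).trans_lt (h j hj)
  push Not at hzero
  exact prod_map_lt_prod_map hs f g (fun i hi => (h0 i hi).lt_of_ne' (hzero i hi)) h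

theorem Multiset.prod_map_ite_mul_eq_pow_mul_pow {ι M : Type*} [CommMonoid M] [DecidableEq ι]
    (s : Multiset ι) (a : ι) (x y : M) :
    (s.map fun i => if i = a then x * y else y).prod = x ^ s.count a * y ^ card s := by
  have hsplit : (fun i => if i = a then x * y else y) = fun i => (if i = a then x else 1) * y := by
    ext i; split_ifs <;> simp
  rw [hsplit, prod_map_mul, map_const', prod_replicate,
    prod_map_eq_pow_single a fun i hi _ => if_neg hi, if_pos rfl]

namespace Polynomial.Splits

variable {K : Type*} [NormedField K] {p : K[X]}

theorem norm_eval_eq (hp : p.Splits) (x : K) :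
    ‖p.eval x‖ = ‖p.leadingCoeff‖ * (p.roots.map fun β => ‖x - β‖).prod := by
  rw [hp.eval_eq_prod_roots, norm_mul, ← normHom_apply (_ : Multiset K).prod, map_multiset_prod,
    Multiset.map_map]
  rfl

theorem norm_eval_lt_prod_mul_norm_eval (hp : p.Splits) (hroots : p.roots ≠ 0) (c : K → ℝ)
    {w z : K} (h : ∀ β ∈ p.roots, ‖w - β‖ < c β * ‖z - β‖) :
    ‖p.eval w‖ < (p.roots.map c).prod * ‖p.eval z‖ := by
  have hp0 : p ≠ 0 := by rintro rfl; exact hroots roots_zero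
  have hlc : 0 < ‖p.leadingCoeff‖ := norm_pos_iff.mpr (leadingCoeff_ne_zero.mpr hp0)
  have hprod := Multiset.prod_map_lt_prod_map_of_nonneg hroots _ _ (fun β _ => norm_nonneg _) h
  rw [Multiset.prod_map_mul] at hprod
  rw [hp.norm_eval_eq, hp.norm_eval_eq, mul_left_comm]
  exact mul_lt_mul_of_pos_left hprod hlc

theorem norm_eval_lt_two_pow_mul_norm_eval [DecidableEq K] (hp : p.Splits) (hroots : p.roots ≠ 0)
    {α w z : K} (hnear : ‖w - α‖ < 4 * ‖z - α‖)
    (hfar : ∀ β ∈ p.roots, β ≠ α → ‖w - β‖ < 2 * ‖z - β‖) :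
    ‖p.eval w‖ < 2 ^ (p.roots.count α + p.roots.card) * ‖p.eval z‖ := by
  have key := hp.norm_eval_lt_prod_mul_norm_eval (w := w) (z := z) hroots
    (fun β => if β = α then 2 * 2 else 2) fun β hβ => by
      by_cases hβα : β = α
      · rw [if_pos hβα, hβα]
        linarith
      · rw [if_neg hβα]
        exact hfar β hβ hβα
  rwa [Multiset.prod_map_ite_mul_eq_pow_mul_pow, ← pow_add] at key

end Polynomial.Splits

theorem Polynomial.norm_eval_map_ofReal (R : ℝ[X]) (x : ℝ) :
    ‖(R.map (algebraMap ℝ ℂ)).eval (x : ℂ)‖ = |R.eval x| := by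
  rw [eval_map_algebraMap, show (x : ℂ) = algebraMap ℝ ℂ x from rfl,
    aeval_algebraMap_apply_eq_algebraMap_eval]
  exact Complex.norm_real _

section Triangle

variable {E : Type*} [SeminormedAddCommGroup E] {z w m β : E} {ρ : ℝ}

theorem norm_sub_lt_two_mul_norm_sub_of_far (hz : ‖z - m‖ ≤ ρ) (hw : ‖w - m‖ ≤ ρ)
    (hβ : 3 * ρ < ‖β - m‖) : ‖w - β‖ < 2 * ‖z - β‖ := by
  have hwβ := norm_sub_le_norm_sub_add_norm_sub w m β
  have hzβ := norm_sub_le_norm_sub_add_norm_sub β z m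
  rw [norm_sub_rev m β] at hwβ
  rw [norm_sub_rev β z] at hzβ
  linarith

theorem norm_sub_lt_three_mul_norm_sub_of_near (hz : ρ ≤ ‖z - m‖) (hw : ‖w - m‖ ≤ ρ)
    (hβ : 2 * ‖β - m‖ < ρ) : ‖w - β‖ < 3 * ‖z - β‖ := by
  have hwβ := norm_sub_le_norm_sub_add_norm_sub w m β
  have hzβ := norm_sub_le_norm_sub_add_norm_sub z β m
  rw [norm_sub_rev m β] at hwβ
  linarith

end Triangle

theorem resultant_lower_bound_general (R : Polynomial ℝ) (n i₀ : ℕ)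
    (hn : n = R.natDegree) (α a b m r : ℝ)
    (hm : m = (a + b) / 2) (hr : r = (b - a) / 2)
    (hαI : a < α ∧ α < b)
    (hmult : (R.map (algebraMap ℝ ℂ)).rootMultiplicity (α : ℂ) = i₀) (hi₀ : 1 ≤ i₀)
    (hsep : ∀ β : ℂ, (R.map (algebraMap ℝ ℂ)).eval β = 0 → β ≠ (α : ℂ) →
      ‖β - m‖ > 8 * r) :
    ∀ z : ℂ, ‖z - m‖ = 2 * r →
      ‖(R.map (algebraMap ℝ ℂ)).eval z‖ >
        (2 : ℝ) ^ (-(i₀ : ℤ) - (n : ℤ)) * |R.eval (m - 2 * r)| := by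
  classical
  intro z hz
  obtain ⟨hαa, hαb⟩ := hαI
  set S := R.map (algebraMap ℝ ℂ)
  have hS : S.Splits := IsAlgClosed.splits S
  have hcount : S.roots.count (α : ℂ) = i₀ := by rw [count_roots, hmult]
  have hcard : S.roots.card = n := by rw [splits_iff_card_roots.mp hS, natDegree_map, hn]
  have hroots : S.roots ≠ 0 :=
    Multiset.card_pos.mp ((hi₀.trans_eq hcount.symm).trans (Multiset.count_le_card _ _))
  have hw : ‖((m - 2 * r : ℝ) : ℂ) - m‖ = 2 * r := by
    rw [← Complex.ofReal_sub, Complex.norm_real, Real.norm_eq_abs, abs_of_nonpos] <;> linarith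
  have hα : 2 * ‖(α : ℂ) - m‖ < 2 * r := by
    rw [← Complex.ofReal_sub, Complex.norm_real, Real.norm_eq_abs]
    linarith [abs_sub_lt_iff.mpr (⟨by linarith, by linarith⟩ : α - m < r ∧ m - α < r)]
  have key := hS.norm_eval_lt_two_pow_mul_norm_eval hroots (α := α) (z := z)
    (by linarith [norm_sub_lt_three_mul_norm_sub_of_near hz.ge hw.le hα, norm_nonneg (z - α)])
    fun β hβ hβα => norm_sub_lt_two_mul_norm_sub_of_far hz.le hw.le <| by
      linarith [hsep β (isRoot_of_mem_roots hβ) hβα]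
  rw [hcount, hcard, norm_eval_map_ofReal] at key
  rw [← neg_add', zpow_neg, ← Nat.cast_add, zpow_natCast, gt_iff_lt,
    inv_mul_lt_iff₀ (by positivity)]
  exact key

theorem resultant_lower_bound (R : Polynomial ℝ) (hR : R ≠ 0) (n i₀ : ℕ)
    (hn : n = R.natDegree) (α a b m r : ℝ)
    (hab : a < b) (hm : m = (a + b) / 2) (hr : r = (b - a) / 2)
    (hαI : a < α ∧ α < b)
    (hmult : (R.map (algebraMap ℝ ℂ)).rootMultiplicity (α : ℂ) = i₀) (hi₀ : 1 ≤ i₀)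
    (hsep : ∀ β : ℂ, (R.map (algebraMap ℝ ℂ)).eval β = 0 → β ≠ (α : ℂ) →
      ‖β - m‖ > 8 * r) :
    ∀ z : ℂ, ‖z - m‖ = 2 * r →
      ‖(R.map (algebraMap ℝ ℂ)).eval z‖ >
        (2 : ℝ) ^ (-(i₀ : ℤ) - (n : ℤ)) * |R.eval (m - 2 * r)| :=
  resultant_lower_bound_general R n i₀ hn α a b m r hm hr hαI hmult hi₀ hsep
end

section
/- Let f, g ∈ ℝ[x,y], and let Δ₁, Δ₂ ⊂ ℂ be open discs centered at real points, each symmetric under complex conjugation, such that Δ₁ contains at most one root of res(f,g,y) and Δ₂ contains at most one root of res(f,g,x). If the polydisc Δ₁ × Δ₂ contains a common zero (x₀,y₀) of f and g, then x₀ and y₀ are real. -/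
/-! Conjugation fixes the real coefficients and the real centres, so `(conj x₀, conj y₀)` is again
a common zero in the polydisc; elimination puts both coordinates among the resultant roots in their
discs, where there is at most one, hence `conj x₀ = x₀` and `conj y₀ = y₀`. -/

open MvPolynomial ComplexConjugate

theorem MvPolynomial.aeval_conj {σ : Type*} (p : MvPolynomial σ ℝ) (x : σ → ℂ) :
    aeval (fun i ↦ conj (x i)) p = conj (aeval x p) :=
  (comp_aeval_apply (f := x) Complex.conjAe.toAlgHom p).symm

theorem Complex.conj_mem_ball_ofReal {c r : ℝ} {z : ℂ} (hz : z ∈ Metric.ball (c : ℂ) r) :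
    conj z ∈ Metric.ball (c : ℂ) r := by
  rwa [Metric.mem_ball, ← Complex.conj_ofReal, Complex.dist_conj_conj]

theorem Complex.im_eq_zero_of_conj_of_unique_in_ball {P : ℂ → Prop} {c r : ℝ}
    (huniq : ∀ z₁ ∈ Metric.ball (c : ℂ) r, ∀ z₂ ∈ Metric.ball (c : ℂ) r, P z₁ → P z₂ → z₁ = z₂)
    {z : ℂ} (hz : z ∈ Metric.ball (c : ℂ) r) (hPz : P z) (hPconj : P (conj z)) : z.im = 0 :=
  Complex.conj_eq_iff_im.mp (huniq _ (conj_mem_ball_ofReal hz) z hz hPconj hPz)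

theorem polydisc_solution_is_real (f g : MvPolynomial (Fin 2) ℝ)
    (Ry Rx : Polynomial ℝ) (c₁ c₂ r₁ r₂ : ℝ)
    (helim : ∀ a b : ℂ, MvPolynomial.aeval ![a, b] f = 0 → MvPolynomial.aeval ![a, b] g = 0 →
      (Ry.map (algebraMap ℝ ℂ)).eval a = 0 ∧ (Rx.map (algebraMap ℝ ℂ)).eval b = 0)
    (h₁ : ∀ z₁ ∈ Metric.ball (c₁ : ℂ) r₁, ∀ z₂ ∈ Metric.ball (c₁ : ℂ) r₁,
      (Ry.map (algebraMap ℝ ℂ)).eval z₁ = 0 → (Ry.map (algebraMap ℝ ℂ)).eval z₂ = 0 → z₁ = z₂)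
    (h₂ : ∀ w₁ ∈ Metric.ball (c₂ : ℂ) r₂, ∀ w₂ ∈ Metric.ball (c₂ : ℂ) r₂,
      (Rx.map (algebraMap ℝ ℂ)).eval w₁ = 0 → (Rx.map (algebraMap ℝ ℂ)).eval w₂ = 0 → w₁ = w₂)
    (x₀ y₀ : ℂ) (hx₀ : x₀ ∈ Metric.ball (c₁ : ℂ) r₁) (hy₀ : y₀ ∈ Metric.ball (c₂ : ℂ) r₂)
    (hf : MvPolynomial.aeval ![x₀, y₀] f = 0) (hg : MvPolynomial.aeval ![x₀, y₀] g = 0) :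
    x₀.im = 0 ∧ y₀.im = 0 := by
  have conj_point : (fun i ↦ conj (![x₀, y₀] i)) = ![conj x₀, conj y₀] := by
    ext i; fin_cases i <;> rfl
  have hf' : aeval ![conj x₀, conj y₀] f = 0 := by rw [← conj_point, aeval_conj, hf, map_zero]
  have hg' : aeval ![conj x₀, conj y₀] g = 0 := by rw [← conj_point, aeval_conj, hg, map_zero]
  obtain ⟨hRy, hRx⟩ := helim x₀ y₀ hf hg
  obtain ⟨hRy', hRx'⟩ := helim (conj x₀) (conj y₀) hf' hg'
  exact ⟨Complex.im_eq_zero_of_conj_of_unique_in_ball h₁ hx₀ hRy hRy',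
    Complex.im_eq_zero_of_conj_of_unique_in_ball h₂ hy₀ hRx hRx'⟩
end

section
/- (Inclusion predicate) Let f, g ∈ ℝ[x,y], write R^{(y)} = u^{(y)}·f + v^{(y)}·g and R^{(x)} = u^{(x)}·f + v^{(x)}·g with u^{(y)}, v^{(y)}, u^{(x)}, v^{(x)} ∈ ℝ[x,y]. Let Δ = Δ₁ × Δ₂ ⊂ ℂ² be a closed polydisc, and suppose: (a) |R^{(y)}(z₁)| > L₁ for all z₁ ∈ ∂Δ₁, (b) |R^{(x)}(z₂)| > L₂ for all z₂ ∈ ∂Δ₂, (c) |u^{(y)}| ≤ U₁, |v^{(y)}| ≤ V₁, |u^{(x)}| ≤ U₂, |v^{(x)}| ≤ V₂ on Δ. If there is a point (x₀,y₀) ∈ Δ with U₁·|f(x₀,y₀)| + V₁·|g(x₀,y₀)| < L₁ and U₂·|f(x₀,y₀)| + V₂·|g(x₀,y₀)| < L₂, then every point (x',y') of Δ with |f(x',y')| ≤ |f(x₀,y₀)| and |g(x',y')| ≤ |g(x₀,y₀)| lies in the interior of Δ (i.e., no such point is on the boundary of Δ). -/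
/-!
If `(x', y')` were on the boundary of the polydisc, say `x' ∈ ∂Δ₁`, then the Bézout identity
`R⁽ʸ⁾ = u⁽ʸ⁾ f + v⁽ʸ⁾ g` and the bounds on the cofactors would give
`L₁ < |R⁽ʸ⁾(x')| ≤ U₁ |f(x', y')| + V₁ |g(x', y')| ≤ U₁ |f(x₀, y₀)| + V₁ |g(x₀, y₀)| < L₁`.
-/

open MvPolynomial

theorem norm_mul_add_mul_le {R : Type*} [NonUnitalSeminormedRing R] {u v a b : R}
    {U V A B : ℝ} (hu : ‖u‖ ≤ U) (hv : ‖v‖ ≤ V) (ha : ‖a‖ ≤ A) (hb : ‖b‖ ≤ B) :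
    ‖u * a + v * b‖ ≤ U * A + V * B :=
  calc ‖u * a + v * b‖ ≤ ‖u‖ * ‖a‖ + ‖v‖ * ‖b‖ :=
        (norm_add_le _ _).trans (add_le_add (norm_mul_le _ _) (norm_mul_le _ _))
    _ ≤ U * A + V * B :=
        add_le_add (mul_le_mul hu ha (norm_nonneg _) ((norm_nonneg _).trans hu))
          (mul_le_mul hv hb (norm_nonneg _) ((norm_nonneg _).trans hv))

theorem Metric.mem_ball_of_lt_of_forall_sphere_lt {X : Type*} [PseudoMetricSpace X]
    {φ : X → ℝ} {c x : X} {r L : ℝ} (hx : x ∈ Metric.closedBall c r)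
    (hsphere : ∀ z ∈ Metric.sphere c r, L < φ z) (hφ : φ x < L) : x ∈ Metric.ball c r := by
  by_contra hball
  have hx_sphere : x ∈ Metric.sphere c r := by
    rw [← Metric.closedBall_sdiff_ball]; exact ⟨hx, hball⟩
  exact (hφ.trans (hsphere x hx_sphere)).false

theorem inclusion_predicate_general (f g uy vy ux vx : MvPolynomial (Fin 2) ℝ)
    (Ry Rx : Polynomial ℝ) (c₁ c₂ r₁ r₂ L₁ L₂ U₁ V₁ U₂ V₂ : ℝ)
    (hRy : ∀ z w : ℂ, (Ry.map (algebraMap ℝ ℂ)).eval z =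
      MvPolynomial.aeval ![z, w] uy * MvPolynomial.aeval ![z, w] f +
      MvPolynomial.aeval ![z, w] vy * MvPolynomial.aeval ![z, w] g)
    (hRx : ∀ z w : ℂ, (Rx.map (algebraMap ℝ ℂ)).eval w =
      MvPolynomial.aeval ![z, w] ux * MvPolynomial.aeval ![z, w] f +
      MvPolynomial.aeval ![z, w] vx * MvPolynomial.aeval ![z, w] g)
    (ha : ∀ z₁ ∈ Metric.sphere (c₁ : ℂ) r₁, norm ((Ry.map (algebraMap ℝ ℂ)).eval z₁) > L₁)
    (hb : ∀ z₂ ∈ Metric.sphere (c₂ : ℂ) r₂, norm ((Rx.map (algebraMap ℝ ℂ)).eval z₂) > L₂)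
    (hc : ∀ z ∈ Metric.closedBall (c₁ : ℂ) r₁, ∀ w ∈ Metric.closedBall (c₂ : ℂ) r₂,
      norm (MvPolynomial.aeval ![z, w] uy) ≤ U₁ ∧
      norm (MvPolynomial.aeval ![z, w] vy) ≤ V₁ ∧
      norm (MvPolynomial.aeval ![z, w] ux) ≤ U₂ ∧
      norm (MvPolynomial.aeval ![z, w] vx) ≤ V₂)
    (x₀ y₀ : ℂ)
    (h₁ : U₁ * norm (MvPolynomial.aeval ![x₀, y₀] f) +
      V₁ * norm (MvPolynomial.aeval ![x₀, y₀] g) < L₁)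
    (h₂ : U₂ * norm (MvPolynomial.aeval ![x₀, y₀] f) +
      V₂ * norm (MvPolynomial.aeval ![x₀, y₀] g) < L₂) :
    ∀ x' ∈ Metric.closedBall (c₁ : ℂ) r₁, ∀ y' ∈ Metric.closedBall (c₂ : ℂ) r₂,
      norm (MvPolynomial.aeval ![x', y'] f) ≤
        norm (MvPolynomial.aeval ![x₀, y₀] f) →
      norm (MvPolynomial.aeval ![x', y'] g) ≤
        norm (MvPolynomial.aeval ![x₀, y₀] g) →
      x' ∈ Metric.ball (c₁ : ℂ) r₁ ∧ y' ∈ Metric.ball (c₂ : ℂ) r₂ := by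
  intro x' hx' y' hy' hf hg
  obtain ⟨hU₁, hV₁, hU₂, hV₂⟩ := hc x' hx' y' hy'
  have hRy_lt : ‖(Ry.map (algebraMap ℝ ℂ)).eval x'‖ < L₁ :=
    (hRy x' y' ▸ norm_mul_add_mul_le hU₁ hV₁ hf hg).trans_lt h₁
  have hRx_lt : ‖(Rx.map (algebraMap ℝ ℂ)).eval y'‖ < L₂ :=
    (hRx x' y' ▸ norm_mul_add_mul_le hU₂ hV₂ hf hg).trans_lt h₂
  exact ⟨Metric.mem_ball_of_lt_of_forall_sphere_lt hx' ha hRy_lt,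
    Metric.mem_ball_of_lt_of_forall_sphere_lt hy' hb hRx_lt⟩

theorem inclusion_predicate (f g uy vy ux vx : MvPolynomial (Fin 2) ℝ)
    (Ry Rx : Polynomial ℝ) (c₁ c₂ r₁ r₂ L₁ L₂ U₁ V₁ U₂ V₂ : ℝ)
    (hr₁ : 0 < r₁) (hr₂ : 0 < r₂)
    (hRy : ∀ z w : ℂ, (Ry.map (algebraMap ℝ ℂ)).eval z =
      MvPolynomial.aeval ![z, w] uy * MvPolynomial.aeval ![z, w] f +
      MvPolynomial.aeval ![z, w] vy * MvPolynomial.aeval ![z, w] g)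
    (hRx : ∀ z w : ℂ, (Rx.map (algebraMap ℝ ℂ)).eval w =
      MvPolynomial.aeval ![z, w] ux * MvPolynomial.aeval ![z, w] f +
      MvPolynomial.aeval ![z, w] vx * MvPolynomial.aeval ![z, w] g)
    (ha : ∀ z₁ ∈ Metric.sphere (c₁ : ℂ) r₁, norm ((Ry.map (algebraMap ℝ ℂ)).eval z₁) > L₁)
    (hb : ∀ z₂ ∈ Metric.sphere (c₂ : ℂ) r₂, norm ((Rx.map (algebraMap ℝ ℂ)).eval z₂) > L₂)
    (hc : ∀ z ∈ Metric.closedBall (c₁ : ℂ) r₁, ∀ w ∈ Metric.closedBall (c₂ : ℂ) r₂,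
      norm (MvPolynomial.aeval ![z, w] uy) ≤ U₁ ∧
      norm (MvPolynomial.aeval ![z, w] vy) ≤ V₁ ∧
      norm (MvPolynomial.aeval ![z, w] ux) ≤ U₂ ∧
      norm (MvPolynomial.aeval ![z, w] vx) ≤ V₂)
    (x₀ y₀ : ℂ) (hx₀ : x₀ ∈ Metric.closedBall (c₁ : ℂ) r₁)
    (hy₀ : y₀ ∈ Metric.closedBall (c₂ : ℂ) r₂)
    (h₁ : U₁ * norm (MvPolynomial.aeval ![x₀, y₀] f) +
      V₁ * norm (MvPolynomial.aeval ![x₀, y₀] g) < L₁)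
    (h₂ : U₂ * norm (MvPolynomial.aeval ![x₀, y₀] f) +
      V₂ * norm (MvPolynomial.aeval ![x₀, y₀] g) < L₂) :
    ∀ x' ∈ Metric.closedBall (c₁ : ℂ) r₁, ∀ y' ∈ Metric.closedBall (c₂ : ℂ) r₂,
      norm (MvPolynomial.aeval ![x', y'] f) ≤
        norm (MvPolynomial.aeval ![x₀, y₀] f) →
      norm (MvPolynomial.aeval ![x', y'] g) ≤
        norm (MvPolynomial.aeval ![x₀, y₀] g) →
      x' ∈ Metric.ball (c₁ : ℂ) r₁ ∧ y' ∈ Metric.ball (c₂ : ℂ) r₂ :=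
  inclusion_predicate_general f g uy vy ux vx Ry Rx c₁ c₂ r₁ r₂ L₁ L₂ U₁ V₁ U₂ V₂ hRy hRx ha hb hc
    x₀ y₀ h₁ h₂
end
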